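/- arXiv:2505.09950 — 3 statements merged into one kernel-verified Lean document; each statement's English description precedes it below -/
import Mathlib

section
/- Let R ⊇ ℚ be a commutative ring, H a free R-module of finite rank, and suppose T^i(t,u) ∈ End_R(H)[[t₁,…,t_n,u]] are connection matrices of a flat (T)-structure ∇_{∂_{t_i}} = ∂_{t_i} + u⁻¹T^i. Then there exists a unique gauge transformation P(t,u) ∈ GL(H[[t₁,…,t_n,u]]) with P(0,u) = id such that for every i, the gauge-transformed matrix u P⁻¹ ∂P/∂t_i + P⁻¹ T^i P is independent of u. -/
/-!
Existence and uniqueness of framings for (T)-structures: if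
`∇_{∂_{t_i}} = ∂_{t_i} + u⁻¹ T^i(t,u)` is a flat (T)-structure on `H ⊗ R[[t₁,…,t_n,u]]`
(`H` a finite free module over a commutative ℚ-algebra `R`; endomorphisms of
`H ⊗ R[[t,u]]` are identified with `End_R(H)[[t,u]]`, where `t₁,…,t_n,u` are the `n+1`
formal variables, `u` being the last one), then there is a unique invertible gauge
transformation `P(t,u)` with `P(0,u) = id` such that every
`u P⁻¹ ∂P/∂t_i + P⁻¹ T^i P` is independent of `u`.
Flatness reads `u(∂_{t_i}T^j − ∂_{t_j}T^i) + [T^i,T^j] = 0`.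
-/

noncomputable section

open MvPowerSeries

/-- The formal partial derivative of a multivariate formal power series in the `i`-th
variable, defined coefficientwise. -/
def fpderiv {m : ℕ} {A : Type*} [Ring A] (i : Fin m) (f : MvPowerSeries (Fin m) A) :
    MvPowerSeries (Fin m) A :=
  fun k => ((k i : ℕ) + 1) • f (k + Finsupp.single i 1)

/-!
Write `Âᵢ = u P⁻¹ ∂_{tᵢ}P + P⁻¹ Tᵢ P` and `E = ∑ tⱼ ∂_{tⱼ}`. The radial part `B = ∑ tⱼ Âⱼ`
satisfies `u E P + (∑ tⱼ Tⱼ) P = P B`. Flatness is gauge invariant, and for a flat family it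
gives `u (E + 1) Âᵢ = u ∂_{tᵢ} B + [Âᵢ, B]`; by induction on the `t`-degree the `Âᵢ` are then
independent of `u` as soon as `B` is. So a framing is the same as a solution of
`u E P + S P = P B`, where `S = ∑ tⱼ Tⱼ`, with `P(0,u) = 1` and `B` independent of `u` and
vanishing at `t = 0`.
In `t`-degree `d > 0` the `u`-free part of this equation determines `B` and the rest determines
`d • P`, both in terms of lower `t`-degrees, so over `ℚ` the solution exists and is unique.
-/

namespace Framing

open Finset.HasAntidiagonal (mem_antidiagonal)
open Function

theorem nsmul_eq_iff_eq_inv_smul {V : Type*} [AddCommGroup V] [Module ℚ V] {m : ℕ} (hm : m ≠ 0)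
    {x y : V} : m • x = y ↔ x = (m : ℚ)⁻¹ • y := by
  rw [← Nat.cast_smul_eq_nsmul ℚ]
  exact smul_eq_iff_eq_inv_smul (Units.mk0 (m : ℚ) (Nat.cast_ne_zero.2 hm))

theorem existsUnique_isFixedPt_of_local {ι β : Type*} [Nonempty β] (μ : ι → ℕ)
    (Φ : (ι → β) → ι → β) (hΦ : ∀ f g k, (∀ j, μ j < μ k → f j = g j) → Φ f k = Φ g k) :
    ∃! f, IsFixedPt Φ f := by
  refine ⟨(measure μ).wf.fix fun k rec =>
      Φ (fun j => if h : μ j < μ k then rec j h else Classical.arbitrary β) k, ?_, fun g hg => ?_⟩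
  · funext k
    rw [WellFounded.fix_eq]
    exact hΦ _ _ k fun j hj => by simp [hj]
  · funext k
    induction hk : μ k using Nat.strong_induction_on generalizing k with
    | _ d ih =>
      rw [← hg, WellFounded.fix_eq]
      exact hΦ _ _ k fun j hj => by rw [dif_pos hj, ih _ (hk ▸ hj) j rfl]

section Calculus

variable {m : ℕ} {A : Type*} [Ring A]

theorem coeff_fpderiv (i : Fin m) (f : MvPowerSeries (Fin m) A) (k : Fin m →₀ ℕ) :
    coeff k (fpderiv i f) = (k i + 1) • coeff (k + Finsupp.single i 1) f := rfl

theorem fpderiv_add (i : Fin m) (f g : MvPowerSeries (Fin m) A) :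
    fpderiv i (f + g) = fpderiv i f + fpderiv i g := by
  ext k
  simp only [coeff_fpderiv, map_add, smul_add]

theorem fpderiv_sum {ι : Type*} (i : Fin m) (s : Finset ι) (f : ι → MvPowerSeries (Fin m) A) :
    fpderiv i (∑ j ∈ s, f j) = ∑ j ∈ s, fpderiv i (f j) := by
  ext k
  simp only [coeff_fpderiv, map_sum, Finset.smul_sum]

theorem fpderiv_comm (i j : Fin m) (f : MvPowerSeries (Fin m) A) :
    fpderiv i (fpderiv j f) = fpderiv j (fpderiv i f) := by
  ext k
  simp only [coeff_fpderiv, smul_smul, add_right_comm k (Finsupp.single j 1)]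
  congr 1
  rcases eq_or_ne i j with rfl | hij
  · rfl
  · simp [hij, Ne.symm hij, mul_comm]

/-- This is `X i * fpderiv i` (`X_mul_fpderiv`). It is visibly a derivation, which gives
Leibniz's rule for `fpderiv` over noncommutative coefficients. -/
def expSMul (i : Fin m) (f : MvPowerSeries (Fin m) A) : MvPowerSeries (Fin m) A :=
  fun k => k i • coeff k f

theorem coeff_expSMul (i : Fin m) (f : MvPowerSeries (Fin m) A) (k : Fin m →₀ ℕ) :
    coeff k (expSMul i f) = k i • coeff k f := rfl

theorem expSMul_mul (i : Fin m) (f g : MvPowerSeries (Fin m) A) :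
    expSMul i (f * g) = expSMul i f * g + f * expSMul i g := by
  ext k
  simp only [coeff_expSMul, map_add, coeff_mul, Finset.smul_sum, ← Finset.sum_add_distrib]
  refine Finset.sum_congr rfl fun p hp => ?_
  rw [← (mem_antidiagonal.1 hp), Finsupp.add_apply, add_smul, smul_mul_assoc, mul_smul_comm]

theorem coeff_add_single_X_mul (s : Fin m) (k : Fin m →₀ ℕ) (f : MvPowerSeries (Fin m) A) :
    coeff (k + Finsupp.single s 1) (X s * f) = coeff k f := by
  rw [X_def, add_comm, coeff_add_monomial_mul, one_mul]

theorem coeff_X_mul_of_eq_zero {s : Fin m} {k : Fin m →₀ ℕ} (h : k s = 0)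
    (f : MvPowerSeries (Fin m) A) : coeff k (X s * f) = 0 := by
  rw [X_def, coeff_monomial_mul, if_neg]
  simp [Finsupp.single_le_iff, h]

theorem exists_eq_add_single_of_ne_zero {k : Fin m →₀ ℕ} {s : Fin m} (h : k s ≠ 0) :
    ∃ j, k = j + Finsupp.single s 1 :=
  ⟨k - Finsupp.single s 1, (tsub_add_cancel_of_le (Finsupp.single_le_iff.2 (by omega))).symm⟩

theorem X_mul_cancel {s : Fin m} {f g : MvPowerSeries (Fin m) A} (h : X s * f = X s * g) :
    f = g := by
  ext k
  rw [← coeff_add_single_X_mul s, h, coeff_add_single_X_mul]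

theorem X_mul_fpderiv (i : Fin m) (f : MvPowerSeries (Fin m) A) :
    X i * fpderiv i f = expSMul i f := by
  ext k
  rw [coeff_expSMul]
  rcases eq_or_ne (k i) 0 with hk | hk
  · rw [coeff_X_mul_of_eq_zero hk, hk, zero_smul]
  · obtain ⟨j, rfl⟩ := exists_eq_add_single_of_ne_zero hk
    simp [coeff_add_single_X_mul, coeff_fpderiv]

theorem fpderiv_mul (i : Fin m) (f g : MvPowerSeries (Fin m) A) :
    fpderiv i (f * g) = fpderiv i f * g + f * fpderiv i g := by
  apply X_mul_cancel (s := i)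
  rw [X_mul_fpderiv, expSMul_mul, mul_add, ← X_mul_fpderiv, ← X_mul_fpderiv, mul_assoc,
    ← mul_assoc f, ← X_mul, mul_assoc]

theorem fpderiv_one (i : Fin m) : fpderiv i (1 : MvPowerSeries (Fin m) A) = 0 := by
  apply X_mul_cancel (s := i)
  ext k
  rw [X_mul_fpderiv, mul_zero, coeff_expSMul, coeff_one]
  split_ifs with hk <;> simp [hk]

theorem fpderiv_X (i s : Fin m) :
    fpderiv i (X s : MvPowerSeries (Fin m) A) = if i = s then 1 else 0 := by
  apply X_mul_cancel (s := i)
  ext k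
  rw [X_mul_fpderiv, coeff_expSMul, coeff_X]
  split_ifs with hk his his <;> simp_all [coeff_X]

theorem fpderiv_of_mul_eq_one (i : Fin m) {P Q : MvPowerSeries (Fin m) A}
    (hQP : Q * P = 1) (hPQ : P * Q = 1) :
    fpderiv i Q = -(Q * fpderiv i P * Q) := by
  have h : fpderiv i Q * P + Q * fpderiv i P = 0 := by rw [← fpderiv_mul, hQP, fpderiv_one]
  calc fpderiv i Q = (fpderiv i Q * P + Q * fpderiv i P) * Q - Q * fpderiv i P * Q := by
        rw [add_mul, mul_assoc _ P, hPQ, mul_one, add_sub_cancel_right]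
    _ = -(Q * fpderiv i P * Q) := by rw [h, zero_mul, zero_sub]

end Calculus

section Radial

variable {n : ℕ} {A : Type*} [Ring A]

def tdeg (k : Fin (n + 1) →₀ ℕ) : ℕ := ∑ j : Fin n, k j.castSucc

theorem tdeg_add (k l : Fin (n + 1) →₀ ℕ) : tdeg (k + l) = tdeg k + tdeg l := by
  simp only [tdeg, Finsupp.add_apply, Finset.sum_add_distrib]

theorem tdeg_eq_zero_iff {k : Fin (n + 1) →₀ ℕ} : tdeg k = 0 ↔ ∀ j : Fin n, k j.castSucc = 0 := by
  simp [tdeg, Finset.sum_eq_zero_iff]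

theorem tdeg_single_last (c : ℕ) : tdeg (Finsupp.single (Fin.last n) c) = 0 :=
  tdeg_eq_zero_iff.2 fun j => Finsupp.single_eq_of_ne (Fin.castSucc_lt_last j).ne

theorem tdeg_add_single_last (k : Fin (n + 1) →₀ ℕ) (c : ℕ) :
    tdeg (k + Finsupp.single (Fin.last n) c) = tdeg k := by
  rw [tdeg_add, tdeg_single_last, add_zero]

def euler (f : MvPowerSeries (Fin (n + 1)) A) : MvPowerSeries (Fin (n + 1)) A :=
  fun k => tdeg k • coeff k f

theorem coeff_euler (f : MvPowerSeries (Fin (n + 1)) A) (k : Fin (n + 1) →₀ ℕ) :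
    coeff k (euler f) = tdeg k • coeff k f := rfl

def radial (F : Fin n → MvPowerSeries (Fin (n + 1)) A) : MvPowerSeries (Fin (n + 1)) A :=
  ∑ j, X j.castSucc * F j

theorem radial_sub (F G : Fin n → MvPowerSeries (Fin (n + 1)) A) :
    radial (fun j => F j - G j) = radial F - radial G := by
  simp only [radial, mul_sub, Finset.sum_sub_distrib]

theorem mul_radial (c : MvPowerSeries (Fin (n + 1)) A) (F : Fin n → MvPowerSeries (Fin (n + 1)) A) :
    c * radial F = radial (fun j => c * F j) := by
  simp only [radial, Finset.mul_sum, ← mul_assoc, (commute_X c _).eq]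

theorem radial_mul (F : Fin n → MvPowerSeries (Fin (n + 1)) A) (c : MvPowerSeries (Fin (n + 1)) A) :
    radial F * c = radial (fun j => F j * c) := by
  simp only [radial, Finset.sum_mul, mul_assoc]

theorem radial_fpderiv (f : MvPowerSeries (Fin (n + 1)) A) :
    radial (fun j => fpderiv j.castSucc f) = euler f := by
  ext k
  simp only [radial, X_mul_fpderiv, map_sum, coeff_expSMul, coeff_euler, tdeg, Finset.sum_smul]

theorem fpderiv_radial (i : Fin n) (F : Fin n → MvPowerSeries (Fin (n + 1)) A) :
    fpderiv i.castSucc (radial F) = F i + radial (fun j => fpderiv i.castSucc (F j)) := by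
  simp only [radial, fpderiv_sum, fpderiv_mul, fpderiv_X, Fin.castSucc_inj, ite_mul, one_mul,
    zero_mul, Finset.sum_add_distrib, Finset.sum_ite_eq, Finset.mem_univ, if_true]

end Radial

section Gauge

variable {n : ℕ} {A : Type*} [Ring A]

/-- Flatness of `∂_{tᵢ} + u⁻¹ Fᵢ`, with the curvature multiplied by `u²`. -/
def IsFlat (F : Fin n → MvPowerSeries (Fin (n + 1)) A) : Prop :=
  ∀ i j : Fin n, X (Fin.last n) * (fpderiv i.castSucc (F j) - fpderiv j.castSucc (F i)) +
    (F i * F j - F j * F i) = 0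

/-- The connection matrices of `∂_{tᵢ} + u⁻¹ Fᵢ` in the frame `P`, where `Q = P⁻¹`. -/
def gauge (P Q : MvPowerSeries (Fin (n + 1)) A) (F : Fin n → MvPowerSeries (Fin (n + 1)) A) :
    Fin n → MvPowerSeries (Fin (n + 1)) A :=
  fun i => X (Fin.last n) * (Q * fpderiv i.castSucc P) + Q * F i * P

theorem IsFlat.gauge {P Q : MvPowerSeries (Fin (n + 1)) A} (hQP : Q * P = 1) (hPQ : P * Q = 1)
    {F : Fin n → MvPowerSeries (Fin (n + 1)) A} (hF : IsFlat F) : IsFlat (gauge P Q F) := by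
  intro i j
  have hu : ∀ l : Fin n, fpderiv l.castSucc (X (Fin.last n) : MvPowerSeries _ A) = 0 := fun l => by
    rw [fpderiv_X, if_neg (Fin.castSucc_lt_last l).ne]
  have hQ : ∀ l : Fin n, fpderiv l.castSucc Q = -(Q * fpderiv l.castSucc P * Q) :=
    fun l => fpderiv_of_mul_eq_one _ hQP hPQ
  have hPQ' : ∀ x, P * (Q * x) = x := fun x => by rw [← mul_assoc, hPQ, one_mul]
  have hXu : ∀ x y : MvPowerSeries (Fin (n + 1)) A,
      x * (X (Fin.last n) * y) = X (Fin.last n) * (x * y) := fun x y => by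
    rw [← mul_assoc, (commute_X x _).eq, mul_assoc]
  have hcurv : Q * (X (Fin.last n) * (fpderiv i.castSucc (F j) - fpderiv j.castSucc (F i)) +
      (F i * F j - F j * F i)) * P = 0 := by rw [hF i j, mul_zero, zero_mul]
  simp only [Framing.gauge, fpderiv_add, fpderiv_mul, hu, hQ, zero_mul, zero_add]
  rw [fpderiv_comm j.castSucc i.castSucc P, ← hcurv]
  simp only [mul_add, add_mul, mul_sub, sub_mul, neg_mul, mul_neg, mul_assoc, hXu, hPQ']
  abel

theorem mul_radial_gauge {P Q : MvPowerSeries (Fin (n + 1)) A} (hPQ : P * Q = 1)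
    (F : Fin n → MvPowerSeries (Fin (n + 1)) A) :
    P * radial (gauge P Q F) = X (Fin.last n) * euler P + radial F * P := by
  have hPQ' : ∀ x, P * (Q * x) = x := fun x => by rw [← mul_assoc, hPQ, one_mul]
  rw [mul_radial, ← radial_fpderiv, mul_radial, radial_mul, radial, radial, radial,
    ← Finset.sum_add_distrib]
  refine Finset.sum_congr rfl fun j _ => ?_
  rw [← mul_add, gauge, mul_add, ← mul_assoc P (X _), (commute_X P _).eq, mul_assoc, hPQ',
    mul_assoc Q, hPQ']

theorem IsFlat.euler_eq {F : Fin n → MvPowerSeries (Fin (n + 1)) A} (hF : IsFlat F) (i : Fin n) :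
    X (Fin.last n) * euler (F i) = X (Fin.last n) * fpderiv i.castSucc (radial F) -
      X (Fin.last n) * F i + (F i * radial F - radial F * F i) := by
  have hswap : X (Fin.last n) * radial (fun j => fpderiv i.castSucc (F j)) =
      X (Fin.last n) * euler (F i) - (F i * radial F - radial F * F i) := by
    have h : ∀ j, X (Fin.last n) * fpderiv i.castSucc (F j) =
        X (Fin.last n) * fpderiv j.castSucc (F i) - (F i * F j - F j * F i) := fun j => by
      rw [eq_sub_iff_add_eq, ← sub_eq_zero, ← hF i j, mul_sub]
      abel
    rw [mul_radial, funext h, radial_sub, ← mul_radial, radial_fpderiv, radial_sub, mul_radial,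
      radial_mul]
  rw [fpderiv_radial, mul_add, hswap]
  abel

end Gauge

section Truncation

variable {n : ℕ} {A : Type*} [Ring A]

def IndepOfU (f : MvPowerSeries (Fin (n + 1)) A) : Prop :=
  ∀ k : Fin (n + 1) →₀ ℕ, k (Fin.last n) ≠ 0 → coeff k f = 0

def VanishesAtTZero (f : MvPowerSeries (Fin (n + 1)) A) : Prop :=
  ∀ k : Fin (n + 1) →₀ ℕ, tdeg k = 0 → coeff k f = 0

theorem IndepOfU.sub {f g : MvPowerSeries (Fin (n + 1)) A} (hf : IndepOfU f) (hg : IndepOfU g) :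
    IndepOfU (f - g) := fun k hk => by rw [map_sub, hf k hk, hg k hk, sub_zero]

theorem IndepOfU.mul {f g : MvPowerSeries (Fin (n + 1)) A} (hf : IndepOfU f) (hg : IndepOfU g) :
    IndepOfU (f * g) := fun k hk => by
  rw [coeff_mul]
  refine Finset.sum_eq_zero fun p hp => ?_
  have hp : p.1 (Fin.last n) + p.2 (Fin.last n) = k (Fin.last n) := by
    rw [← Finsupp.add_apply, mem_antidiagonal.1 hp]
  rcases eq_or_ne (p.1 (Fin.last n)) 0 with h1 | h1
  · rw [hg p.2 (by omega), mul_zero]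
  · rw [hf p.1 h1, zero_mul]

theorem indepOfU_radial {F : Fin n → MvPowerSeries (Fin (n + 1)) A} (hF : ∀ j, IndepOfU (F j)) :
    IndepOfU (radial F) := fun k hk => by
  rw [radial, map_sum]
  refine Finset.sum_eq_zero fun j _ => ?_
  rw [X_def, coeff_monomial_mul]
  split_ifs
  · refine (hF j _ ?_).symm ▸ mul_zero _
    rwa [Finsupp.tsub_apply, Finsupp.single_eq_of_ne (Fin.castSucc_lt_last j).ne', Nat.sub_zero]
  · rfl

theorem vanishesAtTZero_radial (F : Fin n → MvPowerSeries (Fin (n + 1)) A) :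
    VanishesAtTZero (radial F) := fun k hk => by
  rw [radial, map_sum]
  exact Finset.sum_eq_zero fun j _ => coeff_X_mul_of_eq_zero (tdeg_eq_zero_iff.1 hk j) _

def truncTDeg (d : ℕ) (f : MvPowerSeries (Fin (n + 1)) A) : MvPowerSeries (Fin (n + 1)) A :=
  fun k => if tdeg k < d then coeff k f else 0

theorem coeff_truncTDeg (d : ℕ) (f : MvPowerSeries (Fin (n + 1)) A) (k : Fin (n + 1) →₀ ℕ) :
    coeff k (truncTDeg d f) = if tdeg k < d then coeff k f else 0 := rfl

theorem truncTDeg_congr {d : ℕ} {f g : MvPowerSeries (Fin (n + 1)) A}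
    (h : ∀ k, tdeg k < d → coeff k f = coeff k g) : truncTDeg d f = truncTDeg d g := by
  ext k
  simp only [coeff_truncTDeg]
  split_ifs with hk
  exacts [h k hk, rfl]

theorem VanishesAtTZero.truncTDeg {f : MvPowerSeries (Fin (n + 1)) A} (hf : VanishesAtTZero f)
    (d : ℕ) : VanishesAtTZero (truncTDeg d f) := fun k hk => by
  rw [coeff_truncTDeg, hf k hk, ite_self]

theorem vanishesAtTZero_sub_iff {f g : MvPowerSeries (Fin (n + 1)) A} :
    VanishesAtTZero (f - g) ↔
      ∀ k : Fin (n + 1) →₀ ℕ, (∀ j : Fin n, k j.castSucc = 0) → coeff k f = coeff k g := by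
  simp only [VanishesAtTZero, tdeg_eq_zero_iff, map_sub, sub_eq_zero]

theorem coeff_mul_truncTDeg {f : MvPowerSeries (Fin (n + 1)) A} (hf : VanishesAtTZero f)
    {d : ℕ} {k : Fin (n + 1) →₀ ℕ} (hk : tdeg k ≤ d) (g : MvPowerSeries (Fin (n + 1)) A) :
    coeff k (f * g) = coeff k (f * truncTDeg d g) := by
  rw [coeff_mul, coeff_mul]
  refine Finset.sum_congr rfl fun p hp => ?_
  have hp : tdeg p.1 + tdeg p.2 = tdeg k := by rw [← tdeg_add, mem_antidiagonal.1 hp]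
  rcases Nat.eq_zero_or_pos (tdeg p.1) with h1 | h1
  · rw [hf p.1 h1, zero_mul, zero_mul]
  · rw [coeff_truncTDeg, if_pos (by omega)]

theorem coeff_truncTDeg_mul {f : MvPowerSeries (Fin (n + 1)) A} (hf : VanishesAtTZero f)
    {d : ℕ} {k : Fin (n + 1) →₀ ℕ} (hk : tdeg k ≤ d) (g : MvPowerSeries (Fin (n + 1)) A) :
    coeff k (g * f) = coeff k (truncTDeg d g * f) := by
  rw [coeff_mul, coeff_mul]
  refine Finset.sum_congr rfl fun p hp => ?_
  have hp : tdeg p.1 + tdeg p.2 = tdeg k := by rw [← tdeg_add, mem_antidiagonal.1 hp]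
  rcases Nat.eq_zero_or_pos (tdeg p.2) with h2 | h2
  · rw [hf p.2 h2, mul_zero, mul_zero]
  · rw [coeff_truncTDeg, if_pos (by omega)]

theorem IsFlat.indepOfU [Module ℚ A] {F : Fin n → MvPowerSeries (Fin (n + 1)) A} (hF : IsFlat F)
    (hB : IndepOfU (radial F)) (i : Fin n) : IndepOfU (F i) := by
  suffices h : ∀ d, IndepOfU (truncTDeg d (F i)) from fun k hk => by
    simpa [coeff_truncTDeg] using h (tdeg k + 1) k hk
  intro d
  induction d with
  | zero => exact fun k _ => rfl
  | succ d ih =>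
    intro k hk
    rw [coeff_truncTDeg]
    split_ifs with hkd
    · rcases Nat.lt_succ_iff_lt_or_eq.1 hkd with hkd | hkd
      · simpa [coeff_truncTDeg, hkd] using ih k hk
      have hk' : tdeg (k + Finsupp.single (Fin.last n) 1) ≤ d := by
        rw [tdeg_add_single_last, hkd]
      have hdB : coeff k (fpderiv i.castSucc (radial F)) = 0 := by
        have hu : (k + Finsupp.single i.castSucc 1 : Fin (n + 1) →₀ ℕ) (Fin.last n) ≠ 0 := by
          simpa [Finsupp.single_eq_of_ne (Fin.castSucc_lt_last i).ne] using hk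
        rw [coeff_fpderiv, hB _ hu, smul_zero]
      have hcomm : coeff (k + Finsupp.single (Fin.last n) 1)
          (F i * radial F - radial F * F i) = 0 := by
        rw [map_sub, coeff_truncTDeg_mul (vanishesAtTZero_radial F) hk',
          coeff_mul_truncTDeg (vanishesAtTZero_radial F) hk', ← map_sub]
        exact (ih.mul hB).sub (hB.mul ih) _ (by simp)
      have key := congrArg (coeff (k + Finsupp.single (Fin.last n) 1)) (hF.euler_eq i)
      simp only [coeff_add_single_X_mul, coeff_euler, map_add, map_sub, hdB, hcomm, add_zero,
        zero_sub] at key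
      have hsucc : (tdeg k + 1) • coeff k (F i) = 0 := by rw [succ_nsmul, key, neg_add_cancel]
      rw [(nsmul_eq_iff_eq_inv_smul (Nat.succ_ne_zero _)).1 hsucc, smul_zero]
    · rfl

end Truncation

section RadialFraming

variable {n : ℕ} {A : Type*} [Ring A]

/-- For `S = ∑ tⱼ Tⱼ`, the equation says that `B` is the radial part `∑ tⱼ Âⱼ` of the connection
matrices in the frame `P` (`mul_radial_gauge`). -/
def IsRadialFraming (S P B : MvPowerSeries (Fin (n + 1)) A) : Prop :=
  VanishesAtTZero (P - 1) ∧ VanishesAtTZero B ∧ IndepOfU B ∧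
    X (Fin.last n) * euler P + S * P = P * B

/-- The coefficients of `S P - P B + B` in `t`-degree `d`, computed from the parts of `P` and `B`
of lower `t`-degree (`coeff_sub_residual`). -/
def residual (S : MvPowerSeries (Fin (n + 1)) A) (d : ℕ) (P B : MvPowerSeries (Fin (n + 1)) A) :
    MvPowerSeries (Fin (n + 1)) A :=
  S * truncTDeg d P - truncTDeg d (P - 1) * truncTDeg d B

theorem residual_zero (S P B : MvPowerSeries (Fin (n + 1)) A) : residual S 0 P B = 0 := by
  have h : ∀ f : MvPowerSeries (Fin (n + 1)) A, truncTDeg 0 f = 0 := fun f => by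
    ext k
    simp [coeff_truncTDeg]
  simp only [residual, h, mul_zero, sub_zero]

theorem residual_congr {S P P' B B' : MvPowerSeries (Fin (n + 1)) A} {d : ℕ}
    (hP : ∀ k, tdeg k < d → coeff k P = coeff k P')
    (hB : ∀ k, tdeg k < d → coeff k B = coeff k B') :
    residual S d P B = residual S d P' B' := by
  have hP1 : ∀ k, tdeg k < d → coeff k (P - 1) = coeff k (P' - 1) := fun k hk => by
    rw [map_sub, map_sub, hP k hk]
  rw [residual, residual, truncTDeg_congr hP, truncTDeg_congr hP1, truncTDeg_congr hB]

theorem coeff_sub_residual {S P B : MvPowerSeries (Fin (n + 1)) A} (hS : VanishesAtTZero S)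
    (hP : VanishesAtTZero (P - 1)) (hB : VanishesAtTZero B) (k : Fin (n + 1) →₀ ℕ) :
    coeff k (S * P - P * B) = coeff k (residual S (tdeg k) P B) - coeff k B := by
  have hPB : P * B = (P - 1) * B + B := by rw [sub_mul, one_mul, sub_add_cancel]
  rw [hPB, residual, map_sub, map_sub, map_add, coeff_mul_truncTDeg hS le_rfl,
    coeff_truncTDeg_mul hB le_rfl, coeff_mul_truncTDeg (hP.truncTDeg _) le_rfl, sub_add_eq_sub_sub]

theorem coeff_radial_ode {S P B : MvPowerSeries (Fin (n + 1)) A} (hS : VanishesAtTZero S)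
    (hP : VanishesAtTZero (P - 1)) (hB : VanishesAtTZero B) (k : Fin (n + 1) →₀ ℕ) :
    coeff k (X (Fin.last n) * euler P + S * P - P * B) =
      coeff k (X (Fin.last n) * euler P) + coeff k (residual S (tdeg k) P B) - coeff k B := by
  rw [add_sub_assoc, map_add, coeff_sub_residual hS hP hB, add_sub_assoc]

theorem IsRadialFraming.isUnit {S P B : MvPowerSeries (Fin (n + 1)) A}
    (h : IsRadialFraming S P B) : IsUnit P := by
  have h0 := vanishesAtTZero_sub_iff.1 h.1 0 fun _ => rfl
  rw [coeff_zero_eq_constantCoeff_apply, coeff_zero_eq_constantCoeff_apply, map_one] at h0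
  exact isUnit_iff_constantCoeff.2 (h0 ▸ isUnit_one)

theorem isRadialFraming_radial_gauge {T : Fin n → MvPowerSeries (Fin (n + 1)) A}
    {P : (MvPowerSeries (Fin (n + 1)) A)ˣ}
    (hP : VanishesAtTZero ((P : MvPowerSeries (Fin (n + 1)) A) - 1))
    (hA : ∀ i, IndepOfU (gauge P ↑P⁻¹ T i)) :
    IsRadialFraming (radial T) P (radial (gauge P ↑P⁻¹ T)) :=
  ⟨hP, vanishesAtTZero_radial _, indepOfU_radial hA, (mul_radial_gauge P.mul_inv T).symm⟩

variable [Module ℚ A]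

/-- In `t`-degree `d > 0`, the `u`-free part of `u E P + S P = P B` determines `B`, and the rest
determines `d • P`. -/
def radialStep (S : MvPowerSeries (Fin (n + 1)) A) (f : (Fin (n + 1) →₀ ℕ) → A × A) :
    (Fin (n + 1) →₀ ℕ) → A × A := fun k =>
  let ρ := residual S (tdeg k) (fun j => (f j).1) (fun j => (f j).2)
  if tdeg k = 0 then (coeff k 1, 0)
  else ((tdeg k : ℚ)⁻¹ • -coeff (k + Finsupp.single (Fin.last n) 1) ρ,
    if k (Fin.last n) = 0 then coeff k ρ else 0)

theorem radialStep_local (S : MvPowerSeries (Fin (n + 1)) A) (f g : (Fin (n + 1) →₀ ℕ) → A × A)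
    (k : Fin (n + 1) →₀ ℕ) (h : ∀ j, tdeg j < tdeg k → f j = g j) :
    radialStep S f k = radialStep S g k := by
  have hρ := residual_congr (S := S) (fun j hj => congrArg Prod.fst (h j hj))
    (fun j hj => congrArg Prod.snd (h j hj))
  simp only [radialStep, hρ]

theorem IsRadialFraming.isFixedPt {S P B : MvPowerSeries (Fin (n + 1)) A}
    (hS : VanishesAtTZero S) (h : IsRadialFraming S P B) :
    IsFixedPt (radialStep S) fun k => (coeff k P, coeff k B) := by
  obtain ⟨hP, hB0, hBu, hode⟩ := h
  have hcoeff (k) := (coeff_radial_ode hS hP hB0 k).symm.trans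
    (by rw [sub_eq_zero.2 hode, map_zero])
  funext k
  by_cases hk0 : tdeg k = 0
  · simp only [radialStep, if_pos hk0]
    exact Prod.ext (sub_eq_zero.1 (by simpa using hP k hk0)).symm (hB0 k hk0).symm
  simp only [radialStep, if_neg hk0]
  refine Prod.ext ((nsmul_eq_iff_eq_inv_smul hk0).1 ?_).symm ?_
  · have h := hcoeff (k + Finsupp.single (Fin.last n) 1)
    rw [coeff_add_single_X_mul, coeff_euler, tdeg_add_single_last, hBu _ (by simp), sub_zero] at h
    exact eq_neg_of_add_eq_zero_left h
  · dsimp only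
    split_ifs with hku
    · have h := hcoeff k
      rwa [coeff_X_mul_of_eq_zero hku, zero_add, sub_eq_zero] at h
    · exact (hBu k hku).symm

theorem isRadialFraming_of_isFixedPt {S : MvPowerSeries (Fin (n + 1)) A} (hS : VanishesAtTZero S)
    {f : (Fin (n + 1) →₀ ℕ) → A × A} (hf : IsFixedPt (radialStep S) f) :
    IsRadialFraming S (fun k => (f k).1) (fun k => (f k).2) := by
  set P : MvPowerSeries (Fin (n + 1)) A := fun k => (f k).1
  set B : MvPowerSeries (Fin (n + 1)) A := fun k => (f k).2
  have hstep (k) : radialStep S f k = (coeff k P, coeff k B) := congrFun hf k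
  have hP : VanishesAtTZero (P - 1) := fun k hk => by
    have h := congrArg Prod.fst (hstep k)
    simp only [radialStep, if_pos hk] at h
    rw [map_sub, ← h, sub_self]
  have hB0 : VanishesAtTZero B := fun k hk => by
    have h := congrArg Prod.snd (hstep k)
    simp only [radialStep, if_pos hk] at h
    exact h.symm
  have hBu : IndepOfU B := fun k hku => by
    by_cases hk0 : tdeg k = 0
    · exact hB0 k hk0
    have h := congrArg Prod.snd (hstep k)
    simp only [radialStep, if_neg hk0, if_neg hku] at h
    exact h.symm
  refine ⟨hP, hB0, hBu, sub_eq_zero.1 (ext fun k => ?_)⟩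
  rw [coeff_radial_ode hS hP hB0, map_zero]
  rcases eq_or_ne (k (Fin.last n)) 0 with hku | hku
  · rw [coeff_X_mul_of_eq_zero hku, zero_add, sub_eq_zero]
    by_cases hk0 : tdeg k = 0
    · rw [hk0, residual_zero, hB0 k hk0, map_zero]
    have h := congrArg Prod.snd (hstep k)
    simp only [radialStep, if_neg hk0, if_pos hku] at h
    exact h
  · obtain ⟨j, rfl⟩ := exists_eq_add_single_of_ne_zero hku
    rw [coeff_add_single_X_mul, coeff_euler, tdeg_add_single_last, hBu _ hku, sub_zero]
    by_cases hj0 : tdeg j = 0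
    · rw [hj0, zero_smul, residual_zero, map_zero, add_zero]
    have h := congrArg Prod.fst (hstep j)
    simp only [radialStep, if_neg hj0] at h
    rw [(nsmul_eq_iff_eq_inv_smul hj0).2 h.symm, neg_add_cancel]

theorem existsUnique_isRadialFraming {S : MvPowerSeries (Fin (n + 1)) A} (hS : VanishesAtTZero S) :
    ∃! P, ∃ B, IsRadialFraming S P B := by
  obtain ⟨f, hf, huniq⟩ := existsUnique_isFixedPt_of_local tdeg (radialStep S) (radialStep_local S)
  refine ⟨_, ⟨_, isRadialFraming_of_isFixedPt hS hf⟩, fun P ⟨B, hPB⟩ => ?_⟩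
  ext k
  exact congrArg Prod.fst (congrFun (huniq _ (hPB.isFixedPt hS)) k)

theorem IsRadialFraming.indepOfU_gauge {T : Fin n → MvPowerSeries (Fin (n + 1)) A}
    (hT : IsFlat T) {P : (MvPowerSeries (Fin (n + 1)) A)ˣ} {B : MvPowerSeries (Fin (n + 1)) A}
    (h : IsRadialFraming (radial T) P B) (i : Fin n) : IndepOfU (gauge P ↑P⁻¹ T i) := by
  have hB : radial (gauge P ↑P⁻¹ T) = B :=
    (Units.mul_right_inj P).1 (by rw [mul_radial_gauge P.mul_inv, h.2.2.2])
  exact (hT.gauge P.inv_mul P.mul_inv).indepOfU (hB ▸ h.2.2.1) i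

end RadialFraming

end Framing

theorem stmt5_general {n : ℕ} {R : Type*} [CommRing R] [Algebra ℚ R]
    {H : Type*} [AddCommGroup H] [Module R H]
    (T : Fin n → MvPowerSeries (Fin (n + 1)) (Module.End R H))
    (hflat : ∀ i j : Fin n,
      X (Fin.last n) * (fpderiv i.castSucc (T j) - fpderiv j.castSucc (T i)) +
        (T i * T j - T j * T i) = 0) :
    ∃! P : (MvPowerSeries (Fin (n + 1)) (Module.End R H))ˣ,
      -- `P(0,u) = id` : the restriction of `P` to `t = 0` is the identity
      (∀ k : Fin (n + 1) →₀ ℕ, (∀ i : Fin n, k i.castSucc = 0) →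
        (P : MvPowerSeries (Fin (n + 1)) (Module.End R H)) k =
          (1 : MvPowerSeries (Fin (n + 1)) (Module.End R H)) k) ∧
      -- `u P⁻¹ ∂_{t_i}P + P⁻¹ T^i P` is independent of `u`
      (∀ i : Fin n, ∀ k : Fin (n + 1) →₀ ℕ, k (Fin.last n) ≠ 0 →
        ((X (Fin.last n) * ((↑P⁻¹ : MvPowerSeries (Fin (n + 1)) (Module.End R H)) *
            fpderiv i.castSucc (P : MvPowerSeries (Fin (n + 1)) (Module.End R H)))
          + (↑P⁻¹ : MvPowerSeries (Fin (n + 1)) (Module.End R H)) * T i *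
            (↑P : MvPowerSeries (Fin (n + 1)) (Module.End R H)) :
            MvPowerSeries (Fin (n + 1)) (Module.End R H)) k = 0)) := by
  let _ : Module ℚ (Module.End R H) := Module.compHom _ (algebraMap ℚ R)
  obtain ⟨P, ⟨B, hPB⟩, huniq⟩ :=
    Framing.existsUnique_isRadialFraming (Framing.vanishesAtTZero_radial T)
  obtain ⟨U, rfl⟩ := hPB.isUnit
  refine ⟨U, ⟨Framing.vanishesAtTZero_sub_iff.1 hPB.1, hPB.indepOfU_gauge hflat⟩, ?_⟩
  rintro V ⟨hV0, hVu⟩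
  exact Units.ext <| huniq V
    ⟨_, Framing.isRadialFraming_radial_gauge (Framing.vanishesAtTZero_sub_iff.2 hV0) hVu⟩

theorem stmt5 {n : ℕ} {R : Type*} [CommRing R] [Algebra ℚ R]
    {H : Type*} [AddCommGroup H] [Module R H] [Module.Free R H] [Module.Finite R H]
    (T : Fin n → MvPowerSeries (Fin (n + 1)) (Module.End R H))
    (hflat : ∀ i j : Fin n,
      X (Fin.last n) * (fpderiv i.castSucc (T j) - fpderiv j.castSucc (T i)) +
        (T i * T j - T j * T i) = 0) :
    ∃! P : (MvPowerSeries (Fin (n + 1)) (Module.End R H))ˣ,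
      -- `P(0,u) = id` : the restriction of `P` to `t = 0` is the identity
      (∀ k : Fin (n + 1) →₀ ℕ, (∀ i : Fin n, k i.castSucc = 0) →
        (P : MvPowerSeries (Fin (n + 1)) (Module.End R H)) k =
          (1 : MvPowerSeries (Fin (n + 1)) (Module.End R H)) k) ∧
      -- `u P⁻¹ ∂_{t_i}P + P⁻¹ T^i P` is independent of `u`
      (∀ i : Fin n, ∀ k : Fin (n + 1) →₀ ℕ, k (Fin.last n) ≠ 0 →
        ((X (Fin.last n) * ((↑P⁻¹ : MvPowerSeries (Fin (n + 1)) (Module.End R H)) *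
            fpderiv i.castSucc (P : MvPowerSeries (Fin (n + 1)) (Module.End R H)))
          + (↑P⁻¹ : MvPowerSeries (Fin (n + 1)) (Module.End R H)) * T i *
            (↑P : MvPowerSeries (Fin (n + 1)) (Module.End R H)) :
            MvPowerSeries (Fin (n + 1)) (Module.End R H)) k = 0)) :=
  stmt5_general T hflat
end
end

section
/- Let H be a free module over a commutative ℚ-algebra R and let T^i(t) ∈ End_R(H)[[t₁,…,t_n]] satisfy [T^i,T^j] = 0 and ∂_{t_i}T^j = ∂_{t_j}T^i. Suppose S, U_{-2}, U_{-1}, U_0, … ∈ End_R(H)[[t,s]] satisfy, modulo s^{m+1}: [S,T^i]=0, [S,U_{-2}]=0, ∂_s T^i = ∂_{t_i} S, ∂_s U_{-2} = [U_{-1},S] − S, ∂_s U_k = [U_{k+1},S] for k ≥ −1, and the t-direction equations [U_{-2},T^i]=0, ∂_{t_i}U_{-2} = [U_{-1},T^i] − T^i, ∂_{t_i}U_k = [U_{k+1},T^i] hold modulo s^{m+1}. Then ∂_s[T^i,T^j] ≡ 0 (mod s^{m+1}); in particular if [T^i,T^j] vanishes at s = 0 it vanishes modulo s^{m+2}. 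-/
/-!
Key inductive step in the construction of unfoldings of F-bundles: with
`t = (t₁,…,t_n)` and an unfolding parameter `s` (realized as the last of `n+1` formal
variables), connection matrices `T^i`, `S`, `U_k` (`k ≥ −2`) in `End_R(H)[[t,s]]`, and all
the listed flatness/unfolding equations holding modulo `s^{m+1}`, one has
`∂_s[T^i,T^j] ≡ 0 (mod s^{m+1})`; in particular, if `[T^i,T^j]` vanishes at `s = 0` then
it vanishes modulo `s^{m+2}`.
Here `f ≡ g (mod s^{m+1})` means that all coefficients of `s`-degree `≤ m` agree.
-/

noncomputable section

open MvPowerSeries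

/-- Congruence modulo `s^{m+1}`, where `s` is the last of the `n+1` variables:
all coefficients of `s`-degree `≤ m` agree. -/
def SMod {n : ℕ} {A : Type*} [Ring A] (m : ℕ)
    (f g : MvPowerSeries (Fin (n + 1)) A) : Prop :=
  ∀ k : Fin (n + 1) →₀ ℕ, k (Fin.last n) ≤ m → f k = g k

/-!
Differentiating `[T^i, T^j]` in `s` and substituting `∂_s T^i = ∂_{t_i} S` gives
`∂_{t_i}[S, T^j] - ∂_{t_j}[S, T^i] - [S, ∂_{t_i} T^j - ∂_{t_j} T^i]`, and each of these terms
vanishes modulo `s^{m+1}`. Since `ℚ ⊆ R`, the coefficient of `s^{d+1}` is recovered from that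
of `s^d` in the `s`-derivative by dividing by `d + 1`, which gives the second claim.
-/

namespace MvPowerSeries

variable {σ A : Type*} [Ring A]

/-- The Euler operator `x_i ∂/∂x_i`. -/
def eulerOp (i : σ) (f : MvPowerSeries σ A) : MvPowerSeries σ A :=
  fun k => k i • f k

theorem coeff_eulerOp (i : σ) (f : MvPowerSeries σ A) (k : σ →₀ ℕ) :
    coeff k (eulerOp i f) = k i • coeff k f :=
  rfl

theorem eulerOp_mul (i : σ) (f g : MvPowerSeries σ A) :
    eulerOp i (f * g) = eulerOp i f * g + f * eulerOp i g := by
  classical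
  ext k
  simp only [coeff_eulerOp, map_add, coeff_mul, Finset.smul_sum, ← Finset.sum_add_distrib]
  refine Finset.sum_congr rfl fun p hp => ?_
  rw [← Finset.HasAntidiagonal.mem_antidiagonal.mp hp, Finsupp.add_apply, add_smul, smul_mul_assoc,
    mul_smul_comm]

theorem X_mul_injective (i : σ) :
    Function.Injective (X i * · : MvPowerSeries σ A → MvPowerSeries σ A) := by
  intro f g h
  ext k
  have := congrArg (coeff (Finsupp.single i 1 + k)) h
  simpa only [X_def, coeff_add_monomial_mul, one_mul] using this

end MvPowerSeries

section fpderiv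

variable {N : ℕ} {A : Type*} [Ring A]

theorem coeff_fpderiv (i : Fin N) (f : MvPowerSeries (Fin N) A) (k : Fin N →₀ ℕ) :
    coeff k (fpderiv i f) = (k i + 1) • coeff (k + Finsupp.single i 1) f :=
  rfl

theorem fpderiv_zero (i : Fin N) : fpderiv i (0 : MvPowerSeries (Fin N) A) = 0 := by
  ext k
  simp [coeff_fpderiv]

theorem fpderiv_sub (i : Fin N) (f g : MvPowerSeries (Fin N) A) :
    fpderiv i (f - g) = fpderiv i f - fpderiv i g := by
  ext k
  simp only [coeff_fpderiv, map_sub, smul_sub]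

theorem X_mul_fpderiv (i : Fin N) (f : MvPowerSeries (Fin N) A) :
    X i * fpderiv i f = eulerOp i f := by
  classical
  ext k
  rw [X_def, coeff_monomial_mul, coeff_eulerOp]
  split_ifs with hk
  · rw [one_mul, coeff_fpderiv, tsub_add_cancel_of_le hk]
    congr 1
    have := Finsupp.single_le_iff.mp hk
    simp only [Finsupp.tsub_apply, Finsupp.single_eq_same]
    omega
  · rw [Finsupp.single_le_iff, not_le, Nat.lt_one_iff] at hk
    rw [hk, zero_smul]

/-- The Leibniz rule; it reduces to that of the Euler operator since `X i` is central and
cancellable. -/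
theorem fpderiv_mul (i : Fin N) (f g : MvPowerSeries (Fin N) A) :
    fpderiv i (f * g) = fpderiv i f * g + f * fpderiv i g := by
  apply X_mul_injective i
  dsimp only
  rw [X_mul_fpderiv, eulerOp_mul, mul_add, ← mul_assoc, (commute_X f i).symm.left_comm,
    X_mul_fpderiv, X_mul_fpderiv]

end fpderiv

namespace SMod

variable {n m : ℕ} {A : Type*} [Ring A] {f f' g g' h : MvPowerSeries (Fin (n + 1)) A}

protected theorem refl (f : MvPowerSeries (Fin (n + 1)) A) : SMod m f f :=
  fun _ _ => rfl

protected theorem trans (hfg : SMod m f g) (hgh : SMod m g h) : SMod m f h :=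
  fun k hk => (hfg k hk).trans (hgh k hk)

instance : Trans (SMod m : MvPowerSeries (Fin (n + 1)) A → _ → Prop) (SMod m) (SMod m) :=
  ⟨SMod.trans⟩

protected theorem add (hf : SMod m f f') (hg : SMod m g g') : SMod m (f + g) (f' + g') :=
  fun k hk => congrArg₂ (· + ·) (hf k hk) (hg k hk)

protected theorem sub (hf : SMod m f f') (hg : SMod m g g') : SMod m (f - g) (f' - g') :=
  fun k hk => congrArg₂ (· - ·) (hf k hk) (hg k hk)

protected theorem mul (hf : SMod m f f') (hg : SMod m g g') : SMod m (f * g) (f' * g') := by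
  classical
  intro k hk
  change coeff k (f * g) = coeff k (f' * g')
  simp only [coeff_mul]
  refine Finset.sum_congr rfl fun p hp => ?_
  have hdeg := congrArg (· (Fin.last n)) (Finset.HasAntidiagonal.mem_antidiagonal.mp hp)
  simp only [Finsupp.add_apply] at hdeg
  exact congrArg₂ (· * ·) (hf p.1 (by omega)) (hg p.2 (by omega))

theorem fpderiv_castSucc (i : Fin n) (hf : SMod m f g) :
    SMod m (fpderiv i.castSucc f) (fpderiv i.castSucc g) := by
  intro k hk
  refine congrArg _ (hf _ ?_)
  simpa [Finsupp.single_apply, Fin.castSucc_ne_last] using hk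

theorem succ_of_fpderiv_last [IsAddTorsionFree A] (h₀ : SMod 0 f g)
    (hd : SMod m (fpderiv (Fin.last n) f) (fpderiv (Fin.last n) g)) : SMod (m + 1) f g := by
  intro k hk
  rcases Nat.eq_zero_or_pos (k (Fin.last n)) with hk₀ | hk₀
  · exact h₀ k hk₀.le
  have hle : Finsupp.single (Fin.last n) 1 ≤ k := Finsupp.single_le_iff.mpr hk₀
  have := hd (k - Finsupp.single (Fin.last n) 1) <| by
    simp only [Finsupp.coe_tsub, Pi.sub_apply, Finsupp.single_eq_same]; omega
  rw [fpderiv, fpderiv, tsub_add_cancel_of_le hle] at this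
  exact IsAddTorsionFree.nsmul_right_injective (Nat.succ_ne_zero _) this

end SMod

theorem smod_fpderiv_last_commutator {n m : ℕ} {A : Type*} [Ring A] {i j : Fin n}
    {S a b : MvPowerSeries (Fin (n + 1)) A}
    (haS : SMod m (S * a - a * S) 0) (hbS : SMod m (S * b - b * S) 0)
    (hda : SMod m (fpderiv (Fin.last n) a) (fpderiv i.castSucc S))
    (hdb : SMod m (fpderiv (Fin.last n) b) (fpderiv j.castSucc S))
    (hab : SMod m (fpderiv i.castSucc b) (fpderiv j.castSucc a)) :
    SMod m (fpderiv (Fin.last n) (a * b - b * a)) 0 := by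
  set D := fpderiv i.castSucc b - fpderiv j.castSucc a
  have hD : SMod m D 0 := by simpa using hab.sub (.refl (fpderiv j.castSucc a))
  calc fpderiv (Fin.last n) (a * b - b * a)
      = fpderiv (Fin.last n) a * b + a * fpderiv (Fin.last n) b
          - (fpderiv (Fin.last n) b * a + b * fpderiv (Fin.last n) a) := by
        rw [fpderiv_sub, fpderiv_mul, fpderiv_mul]
    SMod m _ (fpderiv i.castSucc S * b + a * fpderiv j.castSucc S
          - (fpderiv j.castSucc S * a + b * fpderiv i.castSucc S)) :=
        ((hda.mul (.refl b)).add ((SMod.refl a).mul hdb)).sub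
          ((hdb.mul (.refl a)).add ((SMod.refl b).mul hda))
    _ = fpderiv i.castSucc (S * b - b * S) - fpderiv j.castSucc (S * a - a * S)
          - (S * D - D * S) := by
        simp only [D, fpderiv_sub, fpderiv_mul]
        noncomm_ring
    SMod m _ (fpderiv i.castSucc 0 - fpderiv j.castSucc 0 - (S * 0 - 0 * S)) :=
        ((hbS.fpderiv_castSucc i).sub (haS.fpderiv_castSucc j)).sub
          ((SMod.refl S).mul hD |>.sub (hD.mul (.refl S)))
    _ = 0 := by simp [fpderiv_zero]

theorem Module.isAddTorsionFree_of_algebra_rat (R M : Type*) [Semiring R] [Algebra ℚ R]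
    [AddCommGroup M] [Module R M] : IsAddTorsionFree M :=
  letI := Module.compHom M (algebraMap ℚ R)
  .of_module_rat M

theorem stmt6_general {n : ℕ} {R : Type*} [CommRing R] [Algebra ℚ R]
    {H : Type*} [AddCommGroup H] [Module R H]
    (m : ℕ)
    (T : Fin n → MvPowerSeries (Fin (n + 1)) (Module.End R H))
    (S : MvPowerSeries (Fin (n + 1)) (Module.End R H))
    -- equations (s-direction), modulo s^{m+1}:
    (hST : ∀ i, SMod m (S * T i - T i * S) 0)
    (hdsT : ∀ i, SMod m (fpderiv (Fin.last n) (T i)) (fpderiv i.castSucc S))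
    -- equations (t-directions), modulo s^{m+1}:
    (hdTT : ∀ i j, SMod m (fpderiv i.castSucc (T j)) (fpderiv j.castSucc (T i))) :
    (∀ i j, SMod m (fpderiv (Fin.last n) (T i * T j - T j * T i)) 0) ∧
    (∀ i j, (∀ k : Fin (n + 1) →₀ ℕ, k (Fin.last n) = 0 →
        (T i * T j - T j * T i) k = 0) →
      SMod (m + 1) (T i * T j - T j * T i) 0) := by
  have := Module.isAddTorsionFree_of_algebra_rat R (Module.End R H)
  have hd i j : SMod m (fpderiv (Fin.last n) (T i * T j - T j * T i)) 0 :=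
    smod_fpderiv_last_commutator (hST i) (hST j) (hdsT i) (hdsT j) (hdTT i j)
  refine ⟨hd, fun i j h₀ => SMod.succ_of_fpderiv_last (fun k hk => h₀ k (Nat.le_zero.mp hk)) ?_⟩
  simpa only [fpderiv_zero] using hd i j

theorem stmt6 {n : ℕ} {R : Type*} [CommRing R] [Algebra ℚ R]
    {H : Type*} [AddCommGroup H] [Module R H] [Module.Free R H]
    (m : ℕ)
    (T : Fin n → MvPowerSeries (Fin (n + 1)) (Module.End R H))
    (S : MvPowerSeries (Fin (n + 1)) (Module.End R H))
    (U : ℤ → MvPowerSeries (Fin (n + 1)) (Module.End R H))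
    -- equations (s-direction), modulo s^{m+1}:
    (hST : ∀ i, SMod m (S * T i - T i * S) 0)
    (hSU : SMod m (S * U (-2) - U (-2) * S) 0)
    (hdsT : ∀ i, SMod m (fpderiv (Fin.last n) (T i)) (fpderiv i.castSucc S))
    (hdsU2 : SMod m (fpderiv (Fin.last n) (U (-2))) ((U (-1) * S - S * U (-1)) - S))
    (hdsU : ∀ k : ℤ, -1 ≤ k →
      SMod m (fpderiv (Fin.last n) (U k)) (U (k + 1) * S - S * U (k + 1)))
    -- equations (t-directions), modulo s^{m+1}:
    (hTT : ∀ i j, SMod m (T i * T j - T j * T i) 0)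
    (hUT : ∀ i, SMod m (U (-2) * T i - T i * U (-2)) 0)
    (hdTT : ∀ i j, SMod m (fpderiv i.castSucc (T j)) (fpderiv j.castSucc (T i)))
    (hdtU2 : ∀ i, SMod m (fpderiv i.castSucc (U (-2)))
      ((U (-1) * T i - T i * U (-1)) - T i))
    (hdtU : ∀ (i : Fin n) (k : ℤ), -1 ≤ k →
      SMod m (fpderiv i.castSucc (U k)) (U (k + 1) * T i - T i * U (k + 1))) :
    (∀ i j, SMod m (fpderiv (Fin.last n) (T i * T j - T j * T i)) 0) ∧
    (∀ i j, (∀ k : Fin (n + 1) →₀ ℕ, k (Fin.last n) = 0 →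
        (T i * T j - T j * T i) k = 0) →
      SMod (m + 1) (T i * T j - T j * T i) 0) :=
  stmt6_general m T S hST hdsT hdTT
end
end

section
/- In the setting of the previous example (R = k[[λ₁,λ₂]], B as given, C = B²), the subalgebra R[A,B,C] ⊂ End_R(R³) generated by A = Id and B is free of rank 3 with basis (A,B,C), and equals its own commutant in End_R(R³): any 3×3 matrix over R commuting with B is an R-linear combination of Id, B, and B². -/
/-!
`B` is a weighted cyclic shift, so `B³ = λ₁λ₂`; reducing polynomials in `B` modulo the monic
`T³ - λ₁λ₂` shows that `R[B]` is spanned by `1, B, B²`, and the first row `(a, cλ₂, b)` of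
`a + bB + cB²` gives their independence. Conversely, commuting with `B` forces a matrix `Y` to be
`Y₀₀ + Y₀₂ B + c B²` as soon as `λ₂ ∣ Y₀₁`, which holds because `λ₁ Y₀₁ = λ₂ Y₁₂` and `λ₂` is
prime to `λ₁`.
-/

noncomputable section

open MvPowerSeries

/-- The matrix `B` of the example, over `k[[λ₁,λ₂]]`. -/
def Bmat (k : Type*) [Field k] : Matrix (Fin 3) (Fin 3) (MvPowerSeries (Fin 2) k) :=
  !![0, 0, 1; X 0, 0, 0; 0, X 1, 0]

open Polynomial in
theorem Algebra.adjoin_singleton_toSubmodule_eq_span_pow {R A : Type*} [CommRing R]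
    [Nontrivial R] [Ring A] [Algebra R A] {b : A} {f : R[X]} (hf : f.Monic) (hb : aeval b f = 0) :
    Subalgebra.toSubmodule (Algebra.adjoin R {b}) =
      Submodule.span R (Set.range fun i : Fin f.natDegree => b ^ (i : ℕ)) := by
  ext y
  rw [Subalgebra.mem_toSubmodule, adjoin_singleton_eq_range_aeval, AlgHom.mem_range,
    PowerBasis.mem_span_pow']
  constructor
  · rintro ⟨p, rfl⟩
    exact ⟨p %ₘ f, (degree_modByMonic_lt p hf).trans_le degree_le_natDegree,
      (aeval_modByMonic_eq_self_of_root hb).symm⟩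
  · rintro ⟨p, -, rfl⟩
    exact ⟨p, rfl⟩

open Polynomial in
theorem Algebra.mem_adjoin_singleton_iff_of_pow_eq_algebraMap {R A : Type*} [CommRing R]
    [Nontrivial R] [Ring A] [Algebra R A] {b : A} {n : ℕ} {r : R} (hn : n ≠ 0)
    (hb : b ^ n = algebraMap R A r) {y : A} :
    y ∈ Algebra.adjoin R {b} ↔ ∃ c : Fin n → R, y = ∑ i, c i • b ^ (i : ℕ) := by
  have h := adjoin_singleton_toSubmodule_eq_span_pow (monic_X_pow_sub_C r hn)
    (b := b) (by simp [hb])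
  rw [natDegree_X_pow_sub_C] at h
  rw [← Subalgebra.mem_toSubmodule, h, Submodule.mem_span_range_iff_exists_fun]
  simp only [eq_comm]

namespace Matrix

variable {R : Type*} [CommRing R] (x y : R)

def weightedCyclicShift : Matrix (Fin 3) (Fin 3) R := !![0, 0, 1; x, 0, 0; 0, y, 0]

theorem weightedCyclicShift_sq :
    weightedCyclicShift x y ^ 2 = !![0, y, 0; 0, 0, x; x * y, 0, 0] := by
  rw [pow_two, weightedCyclicShift, mul_fin_three]
  simp [mul_comm]

theorem weightedCyclicShift_pow_three :
    weightedCyclicShift x y ^ 3 = algebraMap R _ (x * y) := by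
  rw [pow_succ, weightedCyclicShift_sq, weightedCyclicShift, mul_fin_three,
    algebraMap_eq_diagonal, Pi.algebraMap_def, diagonal_fin_three]
  simp [mul_comm]

theorem smul_one_add_smul_weightedCyclicShift_add_smul_sq (a b c : R) :
    a • 1 + b • weightedCyclicShift x y + c • weightedCyclicShift x y ^ 2 =
      !![a, c * y, b; b * x, a, c * x; c * (x * y), b * y, a] := by
  rw [weightedCyclicShift_sq, weightedCyclicShift, one_fin_three]
  ext i j
  fin_cases i <;> fin_cases j <;> simp

variable {x y}

theorem linearIndependent_weightedCyclicShift_pow (hy : IsLeftRegular y) :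
    LinearIndependent R ![1, weightedCyclicShift x y, weightedCyclicShift x y ^ 2] := by
  rw [Fintype.linearIndependent_iff]
  intro g hg i
  simp only [Fin.sum_univ_three, cons_val, smul_one_add_smul_weightedCyclicShift_add_smul_sq,
    ← ext_iff] at hg
  have h2 : g 2 = 0 := hy (show y * g 2 = y * 0 by simpa [mul_comm] using hg 0 1)
  fin_cases i
  · simpa using hg 0 0
  · simpa using hg 0 2
  · exact h2

theorem exists_eq_smul_one_add_smul_weightedCyclicShift_add_smul_sq_of_commute
    (hx : IsLeftRegular x) (hy : IsLeftRegular y) (hxy : ∀ z, y ∣ x * z → y ∣ z)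
    {Y : Matrix (Fin 3) (Fin 3) R}
    (hY : Y * weightedCyclicShift x y = weightedCyclicShift x y * Y) :
    ∃ a b c : R, Y = a • 1 + b • weightedCyclicShift x y + c • weightedCyclicShift x y ^ 2 := by
  rw [eta_fin_three Y, weightedCyclicShift, mul_fin_three, mul_fin_three] at hY
  simp only [mul_zero, zero_mul, add_zero, zero_add, mul_one, one_mul,
    EmbeddingLike.apply_eq_iff_eq, vecCons_inj, and_true] at hY
  obtain ⟨⟨h20, h21, h22⟩, ⟨h11, h12, h10⟩, -, -, -⟩ := hY
  obtain ⟨c, hc⟩ := hxy (Y 0 1) ⟨Y 1 2, by rw [← h12, mul_comm]⟩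
  have h12' : Y 1 2 = c * x := hy (show y * Y 1 2 = y * (c * x) by
    rw [mul_comm, h12, hc]; ring)
  have h11' : Y 1 1 = Y 0 0 := hx (show x * Y 1 1 = x * Y 0 0 by rw [mul_comm, h11])
  refine ⟨Y 0 0, Y 0 2, c, ?_⟩
  rw [smul_one_add_smul_weightedCyclicShift_add_smul_sq]
  conv_lhs => rw [eta_fin_three Y]
  simp only [EmbeddingLike.apply_eq_iff_eq, vecCons_inj, and_true, true_and]
  refine ⟨by rw [hc, mul_comm], ⟨by rw [h10, mul_comm], h11', h12'⟩, ?_, ?_, ?_⟩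
  · rw [← h20, hc]; ring
  · rw [← h21, mul_comm]
  · exact h22.symm

theorem mem_adjoin_weightedCyclicShift_iff [Nontrivial R] {Y : Matrix (Fin 3) (Fin 3) R} :
    Y ∈ Algebra.adjoin R {weightedCyclicShift x y} ↔
      ∃ a b c : R, Y = a • 1 + b • weightedCyclicShift x y + c • weightedCyclicShift x y ^ 2 := by
  rw [Algebra.mem_adjoin_singleton_iff_of_pow_eq_algebraMap three_ne_zero
    (weightedCyclicShift_pow_three x y)]
  simp [Fin.exists_fin_succ_pi, Fin.sum_univ_succ, add_assoc]

end Matrix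

namespace MvPowerSeries

variable {σ R : Type*}

theorem X_ne_zero [Semiring R] [Nontrivial R] (s : σ) : (X s : MvPowerSeries σ R) ≠ 0 := by
  intro h
  simpa [coeff_X] using congrArg (coeff (Finsupp.single s 1)) h

theorem X_dvd_of_dvd_X_mul [Semiring R] {s t : σ} (hst : s ≠ t) {φ : MvPowerSeries σ R}
    (h : X s ∣ X t * φ) : X s ∣ φ := by
  rw [X_dvd_iff] at h ⊢
  intro m hm
  have hcoeff : coeff (Finsupp.single t 1 + m) (X t * φ) = coeff m φ := by
    simpa [← X_def] using coeff_add_monomial_mul (Finsupp.single t 1) m φ (1 : R)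
  rw [← hcoeff]
  exact h _ (by simp [hst.symm, hm])

end MvPowerSeries

theorem stmt11_general {k : Type*} [Field k] :
    LinearIndependent (MvPowerSeries (Fin 2) k)
      ![(1 : Matrix (Fin 3) (Fin 3) (MvPowerSeries (Fin 2) k)), Bmat k, (Bmat k) ^ 2] ∧
    (∀ Y : Matrix (Fin 3) (Fin 3) (MvPowerSeries (Fin 2) k),
      Y ∈ Algebra.adjoin (MvPowerSeries (Fin 2) k) {Bmat k} ↔
        ∃ a b c : MvPowerSeries (Fin 2) k, Y = a • 1 + b • Bmat k + c • (Bmat k) ^ 2) ∧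
    (∀ Y : Matrix (Fin 3) (Fin 3) (MvPowerSeries (Fin 2) k),
      Y * Bmat k = Bmat k * Y →
        Y ∈ Algebra.adjoin (MvPowerSeries (Fin 2) k) {Bmat k}) := by
  have hB : Bmat k = Matrix.weightedCyclicShift (X 0) (X 1) := rfl
  have hX (s : Fin 2) : IsLeftRegular (X s : MvPowerSeries (Fin 2) k) :=
    (IsRegular.of_ne_zero (X_ne_zero s)).left
  have hcoprime (z : MvPowerSeries (Fin 2) k) : X 1 ∣ X 0 * z → X 1 ∣ z :=
    X_dvd_of_dvd_X_mul (by decide)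
  rw [hB]
  exact ⟨Matrix.linearIndependent_weightedCyclicShift_pow (hX 1),
    fun Y => Matrix.mem_adjoin_weightedCyclicShift_iff,
    fun Y hY => Matrix.mem_adjoin_weightedCyclicShift_iff.2 <|
      Matrix.exists_eq_smul_one_add_smul_weightedCyclicShift_add_smul_sq_of_commute (hX 0)
        (hX 1) hcoprime hY⟩

theorem stmt11 {k : Type*} [Field k] [CharZero k] :
    LinearIndependent (MvPowerSeries (Fin 2) k)
      ![(1 : Matrix (Fin 3) (Fin 3) (MvPowerSeries (Fin 2) k)), Bmat k, (Bmat k) ^ 2] ∧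
    (∀ Y : Matrix (Fin 3) (Fin 3) (MvPowerSeries (Fin 2) k),
      Y ∈ Algebra.adjoin (MvPowerSeries (Fin 2) k) {Bmat k} ↔
        ∃ a b c : MvPowerSeries (Fin 2) k, Y = a • 1 + b • Bmat k + c • (Bmat k) ^ 2) ∧
    (∀ Y : Matrix (Fin 3) (Fin 3) (MvPowerSeries (Fin 2) k),
      Y * Bmat k = Bmat k * Y →
        Y ∈ Algebra.adjoin (MvPowerSeries (Fin 2) k) {Bmat k}) :=
  stmt11_general
end
end
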